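/- Let M be an MDP, s a state, T₁,…,T_m ⊆ S absorbing target sets, and q₁,…,q_{m+1} rational coefficients. Then for ▷ ∈ {≥, >}: there exists a scheduler σ ∈ HR with Σ_{i=1}^m qᵢ · Pr^σ_s(◇Tᵢ) ▷ q_{m+1} if and only if there exists a memoryless deterministic scheduler σ with the same property; likewise, for every ε ≥ 0, there exists σ ∈ HR with |Σ_{i=1}^m qᵢ · Pr^σ_s(◇Tᵢ) − q_{m+1}| > ε if and only if there exists a memoryless deterministic such scheduler. That is, MD schedulers suffice for a single scheduler quantifier and a single initial state when all target sets are absorbing and the comparison is an inequality or disequality. -/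

import Mathlib

open scoped BigOperators Classical
open Filter

/-- A finite history: an initial state together with a list of (action, next-state) steps. -/
abbrev Hist (S A : Type*) : Type _ := S × List (A × S)

/-- The last state of a history. -/
def Hist.last {S A : Type*} (π : Hist S A) : S :=
  (π.2.getLast?).elim π.1 Prod.snd

/-- A Markov decision process with finite state space `S` and finite action space `A`:
`P s a s'` is the transition probability, each state has at least one enabled action
(an action whose outgoing probabilities sum to `1`), and the outgoing probabilities
of a non-enabled action sum to `0`. -/
structure MDP (S A : Type*) [Fintype S] [Fintype A] where
  P : S → A → S → ℝ
  nonneg : ∀ s a s', 0 ≤ P s a s'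
  le_one : ∀ s a s', P s a s' ≤ 1
  sum_cases : ∀ s a, (∑ s', P s a s') = 1 ∨ (∑ s', P s a s') = 0
  exists_enabled : ∀ s, ∃ a, (∑ s', P s a s') = 1

namespace MDP

variable {S A : Type*} [Fintype S] [Fintype A]

/-- Action `a` is enabled in state `s`. -/
def enabled (M : MDP S A) (s : S) (a : A) : Prop := (∑ s', M.P s a s') = 1

/-- A state is absorbing if every enabled action loops on it with probability 1. -/
def Absorbing (M : MDP S A) (s : S) : Prop := ∀ a, M.enabled s a → M.P s a s = 1

end MDP

/-- A (history-dependent, randomized) scheduler for `M`: it assigns to every finite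
history a probability distribution over the actions enabled at its last state. -/
structure Scheduler {S A : Type*} [Fintype S] [Fintype A] (M : MDP S A) where
  choice : Hist S A → A → ℝ
  nonneg : ∀ π a, 0 ≤ choice π a
  sum_one : ∀ π, (∑ a, choice π a) = 1
  supp : ∀ π a, ¬ M.enabled (Hist.last π) a → choice π a = 0

namespace Scheduler

variable {S A : Type*} [Fintype S] [Fintype A] {M : MDP S A}

/-- A scheduler is memoryless if its choice only depends on the last state of the history. -/
def Memoryless (σ : Scheduler M) : Prop :=
  ∀ π π' : Hist S A, Hist.last π = Hist.last π' → σ.choice π = σ.choice π'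

/-- A scheduler is deterministic if all its choice probabilities are 0 or 1. -/
def Deterministic (σ : Scheduler M) : Prop :=
  ∀ π a, σ.choice π a = 0 ∨ σ.choice π a = 1

/-- Memoryless deterministic (MD) schedulers. -/
def MD (σ : Scheduler M) : Prop := σ.Memoryless ∧ σ.Deterministic

end Scheduler

/-- Probability of reaching the target set `T` within `n` steps, starting from history `π`,
under scheduler `σ`. -/
noncomputable def reachN {S A : Type*} [Fintype S] [Fintype A] (M : MDP S A)
    (σ : Scheduler M) (T : Set S) : ℕ → Hist S A → ℝ
  | 0, π => if Hist.last π ∈ T then 1 else 0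
  | n + 1, π =>
      if Hist.last π ∈ T then 1
      else ∑ a, σ.choice π a * ∑ s', M.P (Hist.last π) a s' *
        reachN M σ T n (π.1, π.2 ++ [(a, s')])

/-- `Pr M σ s T` is the probability of eventually reaching `T` from state `s` under
scheduler `σ`: the supremum of the step-bounded reachability probabilities. -/
noncomputable def Pr {S A : Type*} [Fintype S] [Fintype A] (M : MDP S A)
    (σ : Scheduler M) (s : S) (T : Set S) : ℝ :=
  ⨆ n : ℕ, reachN M σ T n (s, [])

/-!
Because the targets are absorbing, a path contributes to `∑ i, w i * Pr(◇ T i)` exactly the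
reward `targetReward T w t` of the state `t` at which it first enters `U = ⋃ i, T i`, so the
objective is an expected reward collected on entering `U`. For a discount `β < 1` the Bellman
operator of this problem is a contraction; its fixed point `v` dominates the discounted objective
of every scheduler, and the memoryless scheduler that plays a `v`-greedy action attains it.
As `β → 1` the discounted objectives converge to the undiscounted ones, simultaneously for a given
scheduler and for the finitely many memoryless deterministic ones, so the best memoryless
deterministic scheduler is optimal. Optimizing `q` in both directions settles every inequality
and disequality.
-/

open Topology

lemma Finset.sup'_le_sup'_add {α R : Type*} [LinearOrder R] [Add R] [AddRightMono R]
    {s : Finset α} (hs : s.Nonempty) {f g : α → R} {c : R} (h : ∀ a ∈ s, f a ≤ g a + c) :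
    s.sup' hs f ≤ s.sup' hs g + c :=
  Finset.sup'_le hs f fun a ha => (h a ha).trans (by gcongr; exact Finset.le_sup' g ha)

@[simp]
lemma Hist.last_snoc {S A : Type*} (π : Hist S A) (a : A) (t : S) :
    Hist.last ((π.1, π.2 ++ [(a, t)]) : Hist S A) = t := by
  simp [Hist.last]

section Expectation

variable {S A : Type*} [Fintype S] [Fintype A] {M : MDP S A}

namespace MDP

lemma sum_P_eq_one {t : S} {a : A} (ha : M.enabled t a) : ∑ t', M.P t a t' = 1 := ha

lemma P_eq_zero_of_absorbing {t t' : S} {a : A} (h : M.Absorbing t) (ha : M.enabled t a)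
    (ht' : t' ≠ t) : M.P t a t' = 0 := by
  have hsum : ∑ u ∈ Finset.univ.erase t, M.P t a u = 0 := by
    have := Finset.add_sum_erase Finset.univ (M.P t a) (Finset.mem_univ t)
    rw [h a ha] at this
    linarith [sum_P_eq_one ha]
  exact (Finset.sum_eq_zero_iff_of_nonneg fun u _ => M.nonneg t a u).mp hsum t'
    (Finset.mem_erase.mpr ⟨ht', Finset.mem_univ t'⟩)

lemma sum_P_mul_add_const {t : S} {a : A} (ha : M.enabled t a) (f : S → ℝ) (c : ℝ) :
    ∑ t', M.P t a t' * (f t' + c) = ∑ t', M.P t a t' * f t' + c := by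
  simp only [mul_add, Finset.sum_add_distrib, ← Finset.sum_mul, sum_P_eq_one ha, one_mul]

noncomputable def enabledActions (M : MDP S A) (t : S) : Finset A :=
  Finset.univ.filter (M.enabled t)

lemma mem_enabledActions {t : S} {a : A} : a ∈ M.enabledActions t ↔ M.enabled t a := by
  simp [enabledActions]

lemma enabledActions_nonempty (M : MDP S A) (t : S) : (M.enabledActions t).Nonempty :=
  let ⟨a, ha⟩ := M.exists_enabled t
  ⟨a, mem_enabledActions.mpr ha⟩

noncomputable def maxExpect (M : MDP S A) (t : S) (v : S → ℝ) : ℝ :=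
  (M.enabledActions t).sup' (M.enabledActions_nonempty t) fun a => ∑ t', M.P t a t' * v t'

lemma sum_P_mul_le_maxExpect {t : S} {a : A} (ha : M.enabled t a) (v : S → ℝ) :
    ∑ t', M.P t a t' * v t' ≤ M.maxExpect t v :=
  Finset.le_sup' (fun a => ∑ t', M.P t a t' * v t') (mem_enabledActions.mpr ha)

lemma maxExpect_le_add {v w : S → ℝ} {c : ℝ} (h : ∀ t, v t ≤ w t + c) (t : S) :
    M.maxExpect t v ≤ M.maxExpect t w + c :=
  Finset.sup'_le_sup'_add _ fun a ha => by
    rw [← sum_P_mul_add_const (mem_enabledActions.mp ha)]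
    exact Finset.sum_le_sum fun t' _ => mul_le_mul_of_nonneg_left (h t') (M.nonneg t a t')

abbrev DecisionRule (M : MDP S A) : Type _ := {d : S → A // ∀ t, M.enabled t (d t)}

instance (M : MDP S A) : Nonempty M.DecisionRule :=
  ⟨⟨fun t => (M.exists_enabled t).choose, fun t => (M.exists_enabled t).choose_spec⟩⟩

end MDP

namespace Scheduler

lemma sum_choice_mul_eq (σ : Scheduler M) (π : Hist S A) {x : A → ℝ} {c : ℝ}
    (h : ∀ a, M.enabled (Hist.last π) a → x a = c) : ∑ a, σ.choice π a * x a = c := by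
  rw [← mul_one c, ← σ.sum_one π, Finset.mul_sum]
  refine Finset.sum_congr rfl fun a _ => ?_
  by_cases ha : M.enabled (Hist.last π) a
  · rw [h a ha, mul_comm]
  · simp [σ.supp π a ha]

lemma sum_choice_mul_le (σ : Scheduler M) (π : Hist S A) {x : A → ℝ} {c : ℝ}
    (h : ∀ a, M.enabled (Hist.last π) a → x a ≤ c) : ∑ a, σ.choice π a * x a ≤ c :=
  calc ∑ a, σ.choice π a * x a ≤ ∑ a, σ.choice π a * c :=
        Finset.sum_le_sum fun a _ => by
          by_cases ha : M.enabled (Hist.last π) a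
          · exact mul_le_mul_of_nonneg_left (h a ha) (σ.nonneg π a)
          · simp [σ.supp π a ha]
    _ = c := by rw [← Finset.sum_mul, σ.sum_one, one_mul]

noncomputable def ofRule (d : M.DecisionRule) : Scheduler M where
  choice π a := if a = d.1 (Hist.last π) then 1 else 0
  nonneg π a := by split <;> norm_num
  sum_one π := by simp
  supp π a h := if_neg <| by rintro rfl; exact h (d.2 _)

lemma ofRule_MD (d : M.DecisionRule) : (ofRule d).MD :=
  ⟨fun π π' h => by simp only [ofRule, h],
   fun π a => by by_cases h : a = d.1 (Hist.last π) <;> simp [ofRule, h]⟩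

noncomputable def nextExpect (σ : Scheduler M) (π : Hist S A) : (Hist S A → ℝ) →ₗ[ℝ] ℝ where
  toFun f := ∑ a, σ.choice π a * ∑ t, M.P (Hist.last π) a t * f (π.1, π.2 ++ [(a, t)])
  map_add' f g := by simp only [Pi.add_apply, mul_add, Finset.sum_add_distrib]
  map_smul' c f := by
    simp only [Pi.smul_apply, smul_eq_mul, RingHom.id_apply, Finset.mul_sum]
    exact Finset.sum_congr rfl fun _ _ => Finset.sum_congr rfl fun _ _ => by ring

variable (σ : Scheduler M) (π : Hist S A)

lemma nextExpect_apply (f : Hist S A → ℝ) : σ.nextExpect π f =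
    ∑ a, σ.choice π a * ∑ t, M.P (Hist.last π) a t * f (π.1, π.2 ++ [(a, t)]) := rfl

lemma nextExpect_mono {f g : Hist S A → ℝ} (h : ∀ π', f π' ≤ g π') :
    σ.nextExpect π f ≤ σ.nextExpect π g := by
  rw [nextExpect_apply, nextExpect_apply]
  gcongr with a _ t _
  · exact σ.nonneg π a
  · exact M.nonneg _ a t
  · exact h _

lemma nextExpect_const (c : ℝ) : σ.nextExpect π (fun _ => c) = c := by
  rw [nextExpect_apply]
  exact σ.sum_choice_mul_eq π fun a ha => by rw [← Finset.sum_mul, MDP.sum_P_eq_one ha, one_mul]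

lemma nextExpect_add_const (f : Hist S A → ℝ) (c : ℝ) :
    σ.nextExpect π (fun π' => f π' + c) = σ.nextExpect π f + c :=
  (map_add (σ.nextExpect π) f fun _ => c).trans (congrArg _ (σ.nextExpect_const π c))

lemma nextExpect_nonneg {f : Hist S A → ℝ} (h : ∀ π', 0 ≤ f π') : 0 ≤ σ.nextExpect π f :=
  (σ.nextExpect_const π 0).symm.le.trans (σ.nextExpect_mono π h)

lemma nextExpect_le_one {f : Hist S A → ℝ} (h : ∀ π', f π' ≤ 1) : σ.nextExpect π f ≤ 1 :=
  (σ.nextExpect_mono π h).trans (σ.nextExpect_const π 1).le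

lemma nextExpect_comp_last_le (v : S → ℝ) :
    σ.nextExpect π (fun π' => v (Hist.last π')) ≤ M.maxExpect (Hist.last π) v := by
  simp only [nextExpect_apply, Hist.last_snoc]
  exact σ.sum_choice_mul_le π fun a ha => M.sum_P_mul_le_maxExpect ha v

lemma nextExpect_ofRule (d : M.DecisionRule) (f : Hist S A → ℝ) :
    (ofRule d).nextExpect π f =
      ∑ t, M.P (Hist.last π) (d.1 (Hist.last π)) t * f (π.1, π.2 ++ [(d.1 (Hist.last π), t)]) := by
  rw [nextExpect_apply, Finset.sum_eq_single (d.1 (Hist.last π))]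
  · simp [ofRule]
  · intro a _ ha
    simp [ofRule, ha]
  · simp

lemma nextExpect_of_absorbing (h : M.Absorbing (Hist.last π)) (f : Hist S A → ℝ) :
    σ.nextExpect π f = ∑ a, σ.choice π a * f (π.1, π.2 ++ [(a, Hist.last π)]) := by
  rw [nextExpect_apply]
  refine Finset.sum_congr rfl fun a _ => ?_
  by_cases ha : M.enabled (Hist.last π) a
  · rw [Finset.sum_eq_single (Hist.last π), h a ha, one_mul]
    · exact fun t _ ht => by rw [M.P_eq_zero_of_absorbing h ha ht, zero_mul]
    · simp
  · simp [σ.supp π a ha]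

end Scheduler

end Expectation

section Discounted

variable {S A : Type*} [Fintype S] [Fintype A] {M : MDP S A}

noncomputable def discReachN (M : MDP S A) (σ : Scheduler M) (T : Set S) (β : ℝ) :
    ℕ → Hist S A → ℝ
  | 0, π => if Hist.last π ∈ T then 1 else 0
  | n + 1, π => if Hist.last π ∈ T then 1 else β * σ.nextExpect π (discReachN M σ T β n)

noncomputable def discPr (M : MDP S A) (σ : Scheduler M) (s : S) (T : Set S) (β : ℝ) : ℝ :=
  ⨆ n : ℕ, discReachN M σ T β n (s, [])

variable (σ : Scheduler M) (T : Set S) {β : ℝ}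

lemma reachN_succ (n : ℕ) (π : Hist S A) :
    reachN M σ T (n + 1) π = if Hist.last π ∈ T then 1 else σ.nextExpect π (reachN M σ T n) :=
  rfl

lemma discReachN_one : discReachN M σ T 1 = reachN M σ T := by
  funext n
  induction n with
  | zero => rfl
  | succ n ih => funext π; simp only [discReachN, one_mul, ih, reachN_succ]

lemma discReachN_nonneg (hβ : 0 ≤ β) (n : ℕ) (π : Hist S A) : 0 ≤ discReachN M σ T β n π := by
  induction n generalizing π with
  | zero => unfold discReachN; positivity
  | succ n ih =>
    unfold discReachN
    split_ifs
    exacts [zero_le_one, mul_nonneg hβ (σ.nextExpect_nonneg π ih)]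

lemma discReachN_le_one (hβ0 : 0 ≤ β) (hβ1 : β ≤ 1) (n : ℕ) (π : Hist S A) :
    discReachN M σ T β n π ≤ 1 := by
  induction n generalizing π with
  | zero => unfold discReachN; split_ifs <;> norm_num
  | succ n ih =>
    unfold discReachN
    split_ifs
    exacts [le_rfl, mul_le_one₀ hβ1 (σ.nextExpect_nonneg π (discReachN_nonneg σ T hβ0 n))
      (σ.nextExpect_le_one π ih)]

lemma discReachN_le_succ (hβ : 0 ≤ β) (n : ℕ) (π : Hist S A) :
    discReachN M σ T β n π ≤ discReachN M σ T β (n + 1) π := by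
  induction n generalizing π with
  | zero =>
    unfold discReachN
    split_ifs
    exacts [le_rfl, mul_nonneg hβ (σ.nextExpect_nonneg π (discReachN_nonneg σ T hβ 0))]
  | succ n ih =>
    unfold discReachN
    split_ifs
    exacts [le_rfl, mul_le_mul_of_nonneg_left (σ.nextExpect_mono π ih) hβ]

lemma discReachN_le_reachN (hβ0 : 0 ≤ β) (hβ1 : β ≤ 1) (n : ℕ) (π : Hist S A) :
    discReachN M σ T β n π ≤ reachN M σ T n π := by
  induction n generalizing π with
  | zero => rfl
  | succ n ih =>
    rw [discReachN, reachN_succ]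
    split_ifs
    · exact le_rfl
    · calc β * σ.nextExpect π (discReachN M σ T β n)
          ≤ 1 * σ.nextExpect π (reachN M σ T n) :=
            mul_le_mul hβ1 (σ.nextExpect_mono π ih)
              (σ.nextExpect_nonneg π (discReachN_nonneg σ T hβ0 n)) zero_le_one
        _ = σ.nextExpect π (reachN M σ T n) := one_mul _

lemma pow_mul_reachN_le_discReachN (hβ0 : 0 ≤ β) (hβ1 : β ≤ 1) (n : ℕ) (π : Hist S A) :
    β ^ n * reachN M σ T n π ≤ discReachN M σ T β n π := by
  induction n generalizing π with
  | zero => simp [discReachN, reachN]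
  | succ n ih =>
    rw [discReachN, reachN_succ]
    split_ifs
    · rw [mul_one]
      exact pow_le_one₀ hβ0 hβ1
    · rw [pow_succ', mul_assoc, ← smul_eq_mul (β ^ n), ← map_smul]
      exact mul_le_mul_of_nonneg_left (σ.nextExpect_mono π ih) hβ0

lemma reachN_le_one (n : ℕ) (π : Hist S A) : reachN M σ T n π ≤ 1 :=
  discReachN_one σ T ▸ discReachN_le_one σ T zero_le_one le_rfl n π

lemma bddAbove_reachN (s : S) : BddAbove (Set.range fun n => reachN M σ T n (s, [])) :=
  ⟨1, Set.forall_mem_range.mpr fun n => reachN_le_one σ T n _⟩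

lemma bddAbove_discReachN (hβ0 : 0 ≤ β) (hβ1 : β ≤ 1) (s : S) :
    BddAbove (Set.range fun n => discReachN M σ T β n (s, [])) :=
  ⟨1, Set.forall_mem_range.mpr fun n => discReachN_le_one σ T hβ0 hβ1 n _⟩

lemma discPr_le_Pr (hβ0 : 0 ≤ β) (hβ1 : β ≤ 1) (s : S) : discPr M σ s T β ≤ Pr M σ s T :=
  ciSup_le fun n =>
    (discReachN_le_reachN σ T hβ0 hβ1 n _).trans (le_ciSup (bddAbove_reachN σ T s) n)

lemma tendsto_discReachN_discPr (hβ0 : 0 ≤ β) (hβ1 : β ≤ 1) (s : S) :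
    Tendsto (fun n => discReachN M σ T β n (s, [])) atTop (𝓝 (discPr M σ s T β)) :=
  tendsto_atTop_ciSup (monotone_nat_of_le_succ fun n => discReachN_le_succ σ T hβ0 n _)
    (bddAbove_discReachN σ T hβ0 hβ1 s)

lemma tendsto_discPr_Pr (s : S) :
    Tendsto (fun β => discPr M σ s T β) (𝓝[<] 1) (𝓝 (Pr M σ s T)) := by
  have hIoo : Set.Ioo (0 : ℝ) 1 ∈ 𝓝[<] 1 := Ioo_mem_nhdsLT zero_lt_one
  refine tendsto_order.2 ⟨fun a ha => ?_, fun a ha => ?_⟩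
  · obtain ⟨n, hn⟩ := exists_lt_of_lt_ciSup ha
    have hpow : Tendsto (fun β : ℝ => β ^ n * reachN M σ T n (s, [])) (𝓝[<] 1)
        (𝓝 (reachN M σ T n (s, []))) := by
      have hc : Continuous fun β : ℝ => β ^ n * reachN M σ T n (s, []) := by fun_prop
      simpa using (hc.tendsto 1).mono_left nhdsWithin_le_nhds
    filter_upwards [hpow.eventually (lt_mem_nhds hn), hIoo] with β hlt hβ
    exact hlt.trans_le ((pow_mul_reachN_le_discReachN σ T hβ.1.le hβ.2.le n _).trans
      (le_ciSup (bddAbove_discReachN σ T hβ.1.le hβ.2.le s) n))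
  · filter_upwards [hIoo] with β hβ
    exact (discPr_le_Pr σ T hβ.1.le hβ.2.le s).trans_lt ha

lemma discReachN_of_absorbing (n : ℕ) (π : Hist S A) (h : M.Absorbing (Hist.last π)) :
    discReachN M σ T β n π = if Hist.last π ∈ T then 1 else 0 := by
  induction n generalizing π with
  | zero => rfl
  | succ n ih =>
    rw [discReachN]
    split_ifs with hT
    · rfl
    · rw [σ.nextExpect_of_absorbing π h]
      refine mul_eq_zero_of_right _ (Finset.sum_eq_zero fun a _ => ?_)
      rw [ih _ (by rwa [Hist.last_snoc]), Hist.last_snoc, if_neg hT, mul_zero]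

end Discounted

section Bellman

variable {S A : Type*} [Fintype S] [Fintype A] (M : MDP S A) (U : Set S) (r : S → ℝ) (β : ℝ)

/-- The Bellman operator of the `β`-discounted problem in which the reward `r t` is collected
when `U` is entered at `t`. -/
noncomputable def MDP.bellman (v : S → ℝ) : S → ℝ :=
  fun t => if t ∈ U then r t else β * M.maxExpect t v

lemma MDP.bellman_contracting (hβ0 : 0 ≤ β) (hβ1 : β < 1) :
    ContractingWith (Real.toNNReal β) (M.bellman U r β) := by
  refine ⟨Real.toNNReal_lt_one.mpr hβ1, lipschitzWith_iff_dist_le_mul.mpr fun v w => ?_⟩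
  have hle (v w : S → ℝ) (t : S) : M.maxExpect t v ≤ M.maxExpect t w + dist v w :=
    M.maxExpect_le_add (fun t' => by
      linarith [Real.sub_le_dist (v t') (w t'), dist_le_pi_dist v w t']) t
  rw [Real.coe_toNNReal β hβ0]
  refine (dist_pi_le_iff (by positivity)).mpr fun t => ?_
  unfold MDP.bellman
  split_ifs
  · simpa using by positivity
  · rw [Real.dist_eq, ← mul_sub, abs_mul, abs_of_nonneg hβ0]
    refine mul_le_mul_of_nonneg_left (abs_sub_le_iff.mpr ⟨?_, ?_⟩) hβ0
    · linarith [hle v w t]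
    · linarith [hle w v t, dist_comm v w]

lemma MDP.exists_greedy (v : S → ℝ) :
    ∃ d : M.DecisionRule, ∀ t, ∑ t', M.P t (d.1 t) t' * v t' = M.maxExpect t v := by
  have h t := Finset.exists_mem_eq_sup' (M.enabledActions_nonempty t)
    fun a => ∑ t', M.P t a t' * v t'
  choose d hd hmax using h
  exact ⟨⟨d, fun t => MDP.mem_enabledActions.mp (hd t)⟩, fun t => (hmax t).symm⟩

end Bellman

section Weighted

variable {S A ι : Type*} [Fintype S] [Fintype A] [Fintype ι] {M : MDP S A}
  (σ : Scheduler M) (T : ι → Set S) (w : ι → ℝ) {β : ℝ}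

noncomputable def targetReward (t : S) : ℝ := ∑ i, w i * if t ∈ T i then 1 else 0

lemma weighted_discReachN_of_mem (habs : ∀ i, ∀ t ∈ T i, M.Absorbing t) (n : ℕ) {π : Hist S A}
    (hπ : Hist.last π ∈ ⋃ i, T i) :
    ∑ i, w i * discReachN M σ (T i) β n π = targetReward T w (Hist.last π) := by
  obtain ⟨j, hj⟩ := Set.mem_iUnion.mp hπ
  exact Finset.sum_congr rfl fun i _ => by rw [discReachN_of_absorbing σ _ n π (habs j _ hj)]

lemma weighted_discReachN_zero_of_not_mem {π : Hist S A} (hπ : Hist.last π ∉ ⋃ i, T i) :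
    ∑ i, w i * discReachN M σ (T i) β 0 π = 0 := by
  have hT : ∀ i, Hist.last π ∉ T i := fun i hi => hπ (Set.mem_iUnion_of_mem i hi)
  simp [discReachN, hT]

lemma weighted_discReachN_succ_of_not_mem (n : ℕ) {π : Hist S A} (hπ : Hist.last π ∉ ⋃ i, T i) :
    ∑ i, w i * discReachN M σ (T i) β (n + 1) π =
      β * σ.nextExpect π (fun π' => ∑ i, w i * discReachN M σ (T i) β n π') := by
  have hsum : (fun π' => ∑ i, w i * discReachN M σ (T i) β n π') =
      ∑ i, w i • discReachN M σ (T i) β n := by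
    ext; simp [Finset.sum_apply]
  have hT : ∀ i, Hist.last π ∉ T i := fun i hi => hπ (Set.mem_iUnion_of_mem i hi)
  simp only [discReachN, hT, if_false, hsum, map_sum, map_smul, smul_eq_mul, Finset.mul_sum]
  exact Finset.sum_congr rfl fun i _ => mul_left_comm _ _ _

/-- Comparison principle: `hv` says that `v` is `β`-excessive for `σ` outside the targets. -/
lemma weighted_discReachN_le (habs : ∀ i, ∀ t ∈ T i, M.Absorbing t) (hβ : 0 ≤ β) {v : S → ℝ}
    (hvT : ∀ t ∈ ⋃ i, T i, v t = targetReward T w t)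
    (hv : ∀ π, Hist.last π ∉ ⋃ i, T i →
      β * σ.nextExpect π (fun π' => v (Hist.last π')) ≤ v (Hist.last π))
    (n : ℕ) (π : Hist S A) :
    ∑ i, w i * discReachN M σ (T i) β n π ≤ v (Hist.last π) + β ^ n * ‖v‖ := by
  have hmem (n : ℕ) (π : Hist S A) (hπ : Hist.last π ∈ ⋃ i, T i) :
      ∑ i, w i * discReachN M σ (T i) β n π ≤ v (Hist.last π) + β ^ n * ‖v‖ := by
    rw [weighted_discReachN_of_mem σ T w habs n hπ, hvT _ hπ]
    exact le_add_of_nonneg_right (by positivity)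
  induction n generalizing π with
  | zero =>
    by_cases hπ : Hist.last π ∈ ⋃ i, T i
    · exact hmem 0 π hπ
    · rw [weighted_discReachN_zero_of_not_mem σ T w hπ, pow_zero, one_mul]
      have := norm_le_pi_norm v (Hist.last π)
      rw [Real.norm_eq_abs] at this
      linarith [neg_abs_le (v (Hist.last π))]
  | succ n ih =>
    by_cases hπ : Hist.last π ∈ ⋃ i, T i
    · exact hmem (n + 1) π hπ
    · rw [weighted_discReachN_succ_of_not_mem σ T w n hπ]
      calc β * σ.nextExpect π (fun π' => ∑ i, w i * discReachN M σ (T i) β n π')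
          ≤ β * σ.nextExpect π (fun π' => v (Hist.last π') + β ^ n * ‖v‖) :=
            mul_le_mul_of_nonneg_left (σ.nextExpect_mono π ih) hβ
        _ = β * σ.nextExpect π (fun π' => v (Hist.last π')) + β ^ (n + 1) * ‖v‖ := by
            rw [σ.nextExpect_add_const]; ring
        _ ≤ v (Hist.last π) + β ^ (n + 1) * ‖v‖ := by linarith [hv π hπ]

lemma weighted_discPr_le (habs : ∀ i, ∀ t ∈ T i, M.Absorbing t) (hβ0 : 0 ≤ β) (hβ1 : β < 1)
    {v : S → ℝ} (hvT : ∀ t ∈ ⋃ i, T i, v t = targetReward T w t)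
    (hv : ∀ π, Hist.last π ∉ ⋃ i, T i →
      β * σ.nextExpect π (fun π' => v (Hist.last π')) ≤ v (Hist.last π))
    (s : S) : ∑ i, w i * discPr M σ s (T i) β ≤ v s := by
  have hlim := tendsto_finsetSum Finset.univ fun i _ =>
    (tendsto_discReachN_discPr σ (T i) hβ0 hβ1.le s).const_mul (w i)
  have herr : Tendsto (fun n => v s + β ^ n * ‖v‖) atTop (𝓝 (v s)) := by
    simpa using
      tendsto_const_nhds.add ((tendsto_pow_atTop_nhds_zero_of_lt_one hβ0 hβ1).mul_const ‖v‖)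
  exact le_of_tendsto_of_tendsto' hlim herr fun n =>
    weighted_discReachN_le σ T w habs hβ0 hvT hv n (s, [])

lemma le_weighted_discPr (habs : ∀ i, ∀ t ∈ T i, M.Absorbing t) (hβ0 : 0 ≤ β) (hβ1 : β < 1)
    {v : S → ℝ} (hvT : ∀ t ∈ ⋃ i, T i, v t = targetReward T w t)
    (hv : ∀ π, Hist.last π ∉ ⋃ i, T i →
      v (Hist.last π) ≤ β * σ.nextExpect π (fun π' => v (Hist.last π')))
    (s : S) : v s ≤ ∑ i, w i * discPr M σ s (T i) β := by
  have hnegT : ∀ t ∈ ⋃ i, T i, (-v) t = targetReward T (-w) t := fun t ht => by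
    simp only [Pi.neg_apply, hvT t ht, targetReward, neg_mul, Finset.sum_neg_distrib]
  have hneg : ∀ π, Hist.last π ∉ ⋃ i, T i →
      β * σ.nextExpect π (fun π' => (-v) (Hist.last π')) ≤ (-v) (Hist.last π) := fun π hπ => by
    have hmap : σ.nextExpect π (fun π' => -v (Hist.last π')) =
        -σ.nextExpect π (fun π' => v (Hist.last π')) := map_neg _ _
    simp only [Pi.neg_apply, hmap]
    linarith [hv π hπ]
  have := weighted_discPr_le σ T (-w) habs hβ0 hβ1 hnegT hneg s
  simp only [Pi.neg_apply, neg_mul, Finset.sum_neg_distrib] at this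
  linarith

end Weighted

section Optimal

variable {S A ι : Type*} [Fintype S] [Fintype A] [Fintype ι] {M : MDP S A}
  (T : ι → Set S) (w : ι → ℝ)

lemma exists_rule_weighted_discPr_ge (habs : ∀ i, ∀ t ∈ T i, M.Absorbing t) {β : ℝ}
    (hβ0 : 0 ≤ β) (hβ1 : β < 1) (σ : Scheduler M) (s : S) :
    ∃ d : M.DecisionRule, ∑ i, w i * discPr M σ s (T i) β ≤
      ∑ i, w i * discPr M (Scheduler.ofRule d) s (T i) β := by
  have hcon := M.bellman_contracting (⋃ i, T i) (targetReward T w) β hβ0 hβ1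
  set v := hcon.fixedPoint
  have hv (t : S) : v t = if t ∈ ⋃ i, T i then targetReward T w t else β * M.maxExpect t v :=
    (congrFun hcon.fixedPoint_isFixedPt t).symm
  have hvT (t : S) (ht : t ∈ ⋃ i, T i) : v t = targetReward T w t := by rw [hv, if_pos ht]
  obtain ⟨d, hd⟩ := M.exists_greedy v
  refine ⟨d, (weighted_discPr_le σ T w habs hβ0 hβ1 hvT (fun π hπ => ?_) s).trans
    (le_weighted_discPr _ T w habs hβ0 hβ1 hvT (fun π hπ => ?_) s)⟩
  · rw [hv, if_neg hπ]
    exact mul_le_mul_of_nonneg_left (σ.nextExpect_comp_last_le π v) hβ0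
  · rw [hv, if_neg hπ, Scheduler.nextExpect_ofRule]
    simp only [Hist.last_snoc, hd, le_refl]

lemma tendsto_weighted_discPr_Pr (σ : Scheduler M) (s : S) :
    Tendsto (fun β => ∑ i, w i * discPr M σ s (T i) β) (𝓝[<] 1)
      (𝓝 (∑ i, w i * Pr M σ s (T i))) :=
  tendsto_finsetSum _ fun i _ => (tendsto_discPr_Pr σ (T i) s).const_mul (w i)

theorem exists_MD_maximizer (habs : ∀ i, ∀ t ∈ T i, M.Absorbing t) (s : S) :
    ∃ σ₀ : Scheduler M, σ₀.MD ∧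
      ∀ σ : Scheduler M, ∑ i, w i * Pr M σ s (T i) ≤ ∑ i, w i * Pr M σ₀ s (T i) := by
  obtain ⟨d₀, hd₀⟩ :=
    Finite.exists_max fun d : M.DecisionRule => ∑ i, w i * Pr M (Scheduler.ofRule d) s (T i)
  refine ⟨_, Scheduler.ofRule_MD d₀, fun σ => le_of_forall_pos_lt_add fun δ hδ => ?_⟩
  have hσ := (tendsto_weighted_discPr_Pr T w σ s).eventually
    (lt_mem_nhds (sub_lt_self _ (half_pos hδ)))
  have hrules : ∀ᶠ β in 𝓝[<] 1, ∀ d : M.DecisionRule,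
      ∑ i, w i * discPr M (Scheduler.ofRule d) s (T i) β <
        ∑ i, w i * Pr M (Scheduler.ofRule d) s (T i) + δ / 2 :=
    eventually_all.mpr fun d => (tendsto_weighted_discPr_Pr T w _ s).eventually
      (gt_mem_nhds (lt_add_of_pos_right _ (half_pos hδ)))
  obtain ⟨β, hβσ, hβd, hβ⟩ := (hσ.and (hrules.and (Ioo_mem_nhdsLT zero_lt_one))).exists
  obtain ⟨d, hd⟩ := exists_rule_weighted_discPr_ge T w habs hβ.1.le hβ.2 σ s
  linarith [hβd d, hd₀ d]

theorem exists_MD_minimizer (habs : ∀ i, ∀ t ∈ T i, M.Absorbing t) (s : S) :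
    ∃ σ₀ : Scheduler M, σ₀.MD ∧
      ∀ σ : Scheduler M, ∑ i, w i * Pr M σ₀ s (T i) ≤ ∑ i, w i * Pr M σ s (T i) := by
  obtain ⟨σ₀, hMD, hmax⟩ := exists_MD_maximizer T (-w) habs s
  refine ⟨σ₀, hMD, fun σ => ?_⟩
  simpa only [Pi.neg_apply, neg_mul, Finset.sum_neg_distrib, neg_le_neg_iff] using hmax σ

end Optimal

theorem MD_suffice_absorbing_targets_general
    {S A : Type*} [Fintype S] [Fintype A]
    (M : MDP S A) {m : ℕ} (s : S)
    (q : Fin m → ℚ) (qf : ℚ) (T : Fin m → Set S)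
    (habs : ∀ i, ∀ t ∈ T i, M.Absorbing t) :
    ((∃ σ : Scheduler M,
        (∑ i, (q i : ℝ) * Pr M σ s (T i)) ≥ (qf : ℝ)) ↔
      (∃ σ : Scheduler M, σ.MD ∧
        (∑ i, (q i : ℝ) * Pr M σ s (T i)) ≥ (qf : ℝ))) ∧
    ((∃ σ : Scheduler M,
        (∑ i, (q i : ℝ) * Pr M σ s (T i)) > (qf : ℝ)) ↔
      (∃ σ : Scheduler M, σ.MD ∧
        (∑ i, (q i : ℝ) * Pr M σ s (T i)) > (qf : ℝ))) ∧
    (∀ ε : ℝ, 0 ≤ ε →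
      ((∃ σ : Scheduler M,
          |(∑ i, (q i : ℝ) * Pr M σ s (T i)) - (qf : ℝ)| > ε) ↔
        (∃ σ : Scheduler M, σ.MD ∧
          |(∑ i, (q i : ℝ) * Pr M σ s (T i)) - (qf : ℝ)| > ε))) := by
  obtain ⟨σmax, hmaxMD, hmax⟩ := exists_MD_maximizer T (fun i => (q i : ℝ)) habs s
  obtain ⟨σmin, hminMD, hmin⟩ := exists_MD_minimizer T (fun i => (q i : ℝ)) habs s
  have forget_MD {P : Scheduler M → Prop} : (∃ σ : Scheduler M, σ.MD ∧ P σ) → ∃ σ, P σ :=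
    fun ⟨σ, _, h⟩ => ⟨σ, h⟩
  refine ⟨⟨fun ⟨σ, h⟩ => ⟨σmax, hmaxMD, h.trans (hmax σ)⟩, forget_MD⟩,
    ⟨fun ⟨σ, h⟩ => ⟨σmax, hmaxMD, h.trans_le (hmax σ)⟩, forget_MD⟩,
    fun ε _ => ⟨fun ⟨σ, h⟩ => ?_, forget_MD⟩⟩
  rcases lt_abs.mp h with h | h
  · exact ⟨σmax, hmaxMD, lt_abs.mpr (Or.inl (by linarith [hmax σ]))⟩
  · exact ⟨σmin, hminMD, lt_abs.mpr (Or.inr (by linarith [hmin σ]))⟩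

/-- For a single scheduler quantifier, a single initial state `s`, and
absorbing target sets `T₁, …, T_m`, MD schedulers suffice for inequalities (`≥`, `>`)
and for disequalities (`|·| > ε`). -/
theorem MD_suffice_absorbing_targets
    {S A : Type*} [Fintype S] [Fintype A] [Nonempty S] [Nonempty A]
    (M : MDP S A) {m : ℕ} (hm : 1 ≤ m) (s : S)
    (q : Fin m → ℚ) (qf : ℚ) (T : Fin m → Set S)
    (habs : ∀ i, ∀ t ∈ T i, M.Absorbing t) :
    ((∃ σ : Scheduler M,
        (∑ i, (q i : ℝ) * Pr M σ s (T i)) ≥ (qf : ℝ)) ↔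
      (∃ σ : Scheduler M, σ.MD ∧
        (∑ i, (q i : ℝ) * Pr M σ s (T i)) ≥ (qf : ℝ))) ∧
    ((∃ σ : Scheduler M,
        (∑ i, (q i : ℝ) * Pr M σ s (T i)) > (qf : ℝ)) ↔
      (∃ σ : Scheduler M, σ.MD ∧
        (∑ i, (q i : ℝ) * Pr M σ s (T i)) > (qf : ℝ))) ∧
    (∀ ε : ℝ, 0 ≤ ε →
      ((∃ σ : Scheduler M,
          |(∑ i, (q i : ℝ) * Pr M σ s (T i)) - (qf : ℝ)| > ε) ↔
        (∃ σ : Scheduler M, σ.MD ∧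
          |(∑ i, (q i : ℝ) * Pr M σ s (T i)) - (qf : ℝ)| > ε))) :=
  MD_suffice_absorbing_targets_general M s q qf T habs
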